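/- arXiv:2506.21950 — 8 statements merged into one kernel-verified Lean document; each statement's English description precedes it below -/
import Mathlib

section
/- Let {a_k} be a divergent, increasing sequence of strictly positive real numbers with lim_{k→∞} a_{k+1}/a_k = 1 (with the convention a_{-1} = 0). Then the partial sums ∑_{j=0}^k (a_j - a_{j-1})/a_j are asymptotically equivalent to log(a_k) as k → ∞, i.e. the ratio of the two converges to 1. -/
open Filter Asymptotics Finset

/-- If `a` is a divergent, strictly increasing sequence of strictly positive reals with
`a (k+1) / a k → 1` (with the convention `a (-1) = 0`), then
`∑_{j=0}^k (a j - a (j-1)) / a j ∼ log (a k)` as `k → ∞`. -/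
theorem stmt_0 (a : ℕ → ℝ) (hpos : ∀ k, 0 < a k) (hmono : StrictMono a)
    (hdiv : Tendsto a atTop atTop)
    (hratio : Tendsto (fun k => a (k + 1) / a k) atTop (nhds 1)) :
    Tendsto (fun k => (∑ j ∈ Finset.range (k + 1),
        (a j - if j = 0 then 0 else a (j - 1)) / a j) / Real.log (a k))
      atTop (nhds 1) := by
  set f : ℕ → ℝ := fun j => (a j - if j = 0 then 0 else a (j - 1)) / a j with hf
  set g : ℕ → ℝ := fun j => if j = 0 then 1 else Real.log (a j) - Real.log (a (j - 1)) with hg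
  have hlog : Tendsto (fun k => Real.log (a k)) atTop atTop :=
    Real.tendsto_log_atTop.comp hdiv
  -- y k = a (k+1) / a k
  have hy1 : ∀ k, 1 < a (k + 1) / a k := fun k =>
    (one_lt_div (hpos k)).2 (hmono (Nat.lt_succ_self k))
  have hylog : ∀ k, 0 < Real.log (a (k + 1) / a k) := fun k =>
    Real.log_pos (hy1 k)
  -- g is nonneg, in fact positive
  have hgpos : ∀ j, 0 < g j := by
    intro j
    rcases j with _ | j
    · simp [hg]
    · simp only [hg, Nat.succ_ne_zero, if_false, Nat.succ_sub_one]
      have := hylog j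
      rwa [Real.log_div (hpos _).ne' (hpos _).ne'] at this
  -- g sums telescope
  have hGsum : ∀ n, ∑ j ∈ range (n + 1), g j = 1 + Real.log (a n) - Real.log (a 0) := by
    intro n
    induction n with
    | zero => simp [hg]
    | succ n ih =>
      rw [Finset.sum_range_succ, ih]
      simp only [hg, Nat.succ_ne_zero, if_false, Nat.succ_sub_one]
      ring
  have hGdiv : Tendsto (fun n => ∑ j ∈ range n, g j) atTop atTop := by
    rw [← tendsto_add_atTop_iff_nat 1]
    simp only [hGsum]
    exact tendsto_atTop_add_const_right _ _
      (tendsto_atTop_add_const_left _ 1 hlog)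
  -- f k / g k → 1
  have hslope : Tendsto (fun y : ℝ => Real.log y / (y - 1)) (nhdsWithin 1 {(1:ℝ)}ᶜ) (nhds 1) := by
    have h : Tendsto (slope Real.log 1) (nhdsWithin 1 {(1:ℝ)}ᶜ) (nhds 1) := by
      have h0 := Real.hasDerivAt_log one_ne_zero
      rw [hasDerivAt_iff_tendsto_slope] at h0
      simpa using h0
    refine h.congr fun y => ?_
    rw [slope_def_field, Real.log_one, sub_zero]
  have hynhds : Tendsto (fun k => a (k + 1) / a k) atTop (nhdsWithin 1 {(1:ℝ)}ᶜ) :=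
    tendsto_nhdsWithin_of_tendsto_nhds_of_eventually_within _ hratio
      (Eventually.of_forall fun k => (hy1 k).ne')
  have hs : Tendsto (fun k => Real.log (a (k + 1) / a k) / (a (k + 1) / a k - 1))
      atTop (nhds 1) := hslope.comp hynhds
  have hfg1 : Tendsto (fun k => f (k + 1) / g (k + 1)) atTop (nhds 1) := by
    have h := ((hs.inv₀ one_ne_zero).mul (hratio.inv₀ one_ne_zero))
    simp only [inv_one, mul_one] at h
    refine h.congr' (Eventually.of_forall fun k => ?_)
    have hak := hpos k
    have hak1 := hpos (k + 1)
    have hy := hy1 k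
    have hl := hylog k
    simp only [hf, hg, Nat.succ_ne_zero, if_false, Nat.succ_sub_one]
    rw [Real.log_div hak1.ne' hak.ne'] at hl ⊢
    set L := Real.log (a (k + 1)) - Real.log (a k)
    have hy' : a (k + 1) / a k - 1 ≠ 0 := sub_ne_zero.2 hy.ne'
    field_simp
  have hfg : Tendsto (fun k => f k / g k) atTop (nhds 1) :=
    (tendsto_add_atTop_iff_nat 1).1 hfg1
  have hequiv : f ~[atTop] g :=
    (isEquivalent_iff_tendsto_one (Eventually.of_forall fun k => (hgpos k).ne')).2 hfg
  -- sums are equivalent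
  have hsums : (fun n => ∑ j ∈ range n, f j) ~[atTop] (fun n => ∑ j ∈ range n, g j) := by
    have h1 : ((fun j => f j - g j)) =o[atTop] g := hequiv.isLittleO
    have h2 := h1.sum_range (fun j => (hgpos j).le) hGdiv
    have h3 : (fun n => ∑ j ∈ range n, (f j - g j))
        = fun n => (∑ j ∈ range n, f j) - ∑ j ∈ range n, g j := by
      funext n; rw [Finset.sum_sub_distrib]
    rw [IsEquivalent]
    exact (h3 ▸ h2 : _)
  have hsums' : (fun k => ∑ j ∈ range (k + 1), f j) ~[atTop]
      (fun k => ∑ j ∈ range (k + 1), g j) :=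
    hsums.comp_tendsto (tendsto_add_atTop_nat 1)
  -- G (k+1) ~ log (a k)
  have hGL : (fun k => ∑ j ∈ range (k + 1), g j) ~[atTop] (fun k => Real.log (a k)) := by
    rw [IsEquivalent]
    have h4 : (fun k => (∑ j ∈ range (k + 1), g j) - Real.log (a k))
        = fun _ => 1 - Real.log (a 0) := by
      funext k; rw [hGsum]; ring
    show (fun k => (∑ j ∈ range (k + 1), g j) - Real.log (a k)) =o[atTop]
      fun k => Real.log (a k)
    rw [h4]
    exact isLittleO_const_left.2 (Or.inr (tendsto_abs_atTop_atTop.comp hlog))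
  have hfinal := hsums'.trans hGL
  have hne : ∀ᶠ k in atTop, Real.log (a k) ≠ 0 := by
    filter_upwards [hlog.eventually_gt_atTop 0] with k hk using hk.ne'
  exact (isEquivalent_iff_tendsto_one hne).1 hfinal
end

section
/- Weighted Toeplitz-type lemma: suppose ∑_{k=0}^n x_k = L·n + o(n) as n → ∞ for a complex number L, and {a_n} is a non-increasing sequence of non-negative reals with sup_k k·a_k < ∞ and b_n := ∑_{k=0}^n a_k → ∞. Then ∑_{k=0}^n a_k x_k = L·b_n + o(b_n) as n → ∞. -/
open Filter

/-- Weighted Toeplitz-type lemma: if `(1/n) ∑_{k=0}^n x k → L`, and `a` is a non-increasing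
non-negative real sequence with `sup_k k · a k < ∞` whose partial sums `b n` diverge, then
`∑_{k=0}^n a k • x k = L · b n + o(b n)`, i.e. `(∑_{k=0}^n a k • x k) / b n → L`. -/
theorem stmt_2 (x : ℕ → ℂ) (L : ℂ)
    (hx : Tendsto (fun n => (∑ k ∈ Finset.range (n + 1), x k) / (n : ℂ)) atTop (nhds L))
    (a : ℕ → ℝ) (ha0 : ∀ n, 0 ≤ a n) (hmono : Antitone a)
    (hbdd : ∃ C, ∀ k : ℕ, (k : ℝ) * a k ≤ C)
    (hb : Tendsto (fun n => ∑ k ∈ Finset.range (n + 1), a k) atTop atTop) :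
    Tendsto (fun n => (∑ k ∈ Finset.range (n + 1), (a k : ℂ) * x k) /
        ((∑ k ∈ Finset.range (n + 1), a k : ℝ) : ℂ)) atTop (nhds L) := by
  obtain ⟨C, hC⟩ := hbdd
  have hC0 : 0 ≤ C := le_trans (by simp) (hC 0)
  set b : ℕ → ℝ := fun n => ∑ k ∈ Finset.range (n+1), a k with hbdef
  set y : ℕ → ℂ := fun k => x k - L with hydef
  set T : ℕ → ℂ := fun n => ∑ k ∈ Finset.range (n+1), y k with hTdef
  -- T n / (n+1) → 0
  have hT0 : Tendsto (fun n => T n / ((n:ℂ)+1)) atTop (nhds 0) := by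
    have h2 : Tendsto (fun n : ℕ => ((n:ℂ)/((n:ℂ)+1))) atTop (nhds 1) :=
      tendsto_natCast_div_add_atTop (1 : ℂ)
    have h1 : Tendsto (fun n : ℕ => (∑ k ∈ Finset.range (n + 1), x k) / ((n:ℂ)+1))
        atTop (nhds L) := by
      have := hx.mul h2
      rw [mul_one] at this
      apply this.congr'
      filter_upwards [eventually_ne_atTop 0] with n hn
      have hn' : (n : ℂ) ≠ 0 := Nat.cast_ne_zero.mpr hn
      field_simp
    have := h1.sub_const L
    rw [sub_self] at this
    apply this.congr
    intro n
    have hn1 : ((n:ℂ)+1) ≠ 0 := Nat.cast_add_one_ne_zero n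
    have : T n = (∑ k ∈ Finset.range (n+1), x k) - L * ((n:ℂ)+1) := by
      simp only [hTdef, hydef, Finset.sum_sub_distrib, Finset.sum_const, Finset.card_range,
        nsmul_eq_mul]
      push_cast
      ring
    rw [this]
    field_simp
  -- Abel summation
  have abel : ∀ n, ∑ k ∈ Finset.range (n+1), (a k : ℂ) * y k
      = (a n : ℂ) * T n + ∑ k ∈ Finset.range n, ((a k : ℂ) - (a (k+1) : ℂ)) * T k := by
    intro n
    induction n with
    | zero => simp [hTdef]
    | succ n ih =>
      rw [Finset.sum_range_succ, ih, Finset.sum_range_succ]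
      have hy1 : y (n+1) = T (n+1) - T n := by
        simp [hTdef, Finset.sum_range_succ]
      rw [hy1]; ring
  -- identity for b
  have bid : ∀ n, ∑ k ∈ Finset.range n, (a k - a (k+1)) * ((k:ℝ)+1) = b n - ((n:ℝ)+1) * a n := by
    intro n
    induction n with
    | zero => simp [hbdef]
    | succ n ih =>
      rw [Finset.sum_range_succ, ih]
      have hb1 : b (n+1) = b n + a (n+1) := by
        simp [hbdef, Finset.sum_range_succ]
      rw [hb1]; push_cast; ring
  -- the centered sum over b tends to 0
  have hzero : Tendsto (fun n => (∑ k ∈ Finset.range (n+1), (a k : ℂ) * y k) / ((b n : ℝ) : ℂ))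
      atTop (nhds 0) := by
    rw [NormedAddCommGroup.tendsto_nhds_zero]
    intro ε hε
    set δ : ℝ := ε/4 with hδdef
    have hδ : 0 < δ := by positivity
    obtain ⟨N, hN⟩ := eventually_atTop.mp (NormedAddCommGroup.tendsto_nhds_zero.mp hT0 δ hδ)
    have hTk : ∀ k ≥ N, ‖T k‖ ≤ δ * ((k:ℝ)+1) := by
      intro k hk
      have hk1 : ((k:ℂ)+1) ≠ 0 := Nat.cast_add_one_ne_zero k
      have : ‖T k‖ = ‖T k / ((k:ℂ)+1)‖ * ((k:ℝ)+1) := by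
        rw [norm_div]
        have : ‖(k:ℂ)+1‖ = (k:ℝ)+1 := by
          rw [show ((k:ℂ)+1) = ((k+1 : ℕ) : ℂ) by push_cast; ring, Complex.norm_natCast]
          push_cast; ring
        rw [this]
        field_simp
      rw [this]
      have := (hN k hk).le
      have hpos : (0:ℝ) < (k:ℝ)+1 := by positivity
      nlinarith [norm_nonneg (T k / ((k:ℂ)+1))]
    set M : ℝ := ∑ k ∈ Finset.range N, (a k - a (k+1)) * ‖T k‖ with hMdef
    have hM0 : 0 ≤ M := by
      apply Finset.sum_nonneg
      intro k _
      have := hmono (Nat.le_succ k)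
      have := norm_nonneg (T k)
      nlinarith
    set K : ℝ := δ * (C + a 0) + M with hKdef
    have hK0 : 0 ≤ K := by
      have := ha0 0
      positivity
    -- main estimate
    have hest : ∀ n ≥ N, ‖∑ k ∈ Finset.range (n+1), (a k : ℂ) * y k‖ ≤ K + δ * b n := by
      intro n hn
      rw [abel n]
      have h1 : ‖(a n : ℂ) * T n‖ ≤ δ * (C + a 0) := by
        rw [norm_mul]
        have hna : ‖(a n : ℂ)‖ = a n := by
          rw [Complex.norm_real, Real.norm_of_nonneg (ha0 n)]
        rw [hna]
        have hTn := hTk n hn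
        have h2 : a n * ((n:ℝ)+1) ≤ C + a 0 := by
          have := hC n
          have := hmono (Nat.zero_le n)
          nlinarith
        have := ha0 n
        nlinarith [norm_nonneg (T n)]
      have h2 : ‖∑ k ∈ Finset.range n, ((a k : ℂ) - (a (k+1) : ℂ)) * T k‖ ≤ M + δ * b n := by
        calc ‖∑ k ∈ Finset.range n, ((a k : ℂ) - (a (k+1) : ℂ)) * T k‖
            ≤ ∑ k ∈ Finset.range n, (a k - a (k+1)) * ‖T k‖ := by
              refine le_trans (norm_sum_le _ _) (Finset.sum_le_sum fun k _ => ?_)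
              rw [norm_mul]
              have : ‖(a k : ℂ) - (a (k+1) : ℂ)‖ = a k - a (k+1) := by
                rw [show ((a k : ℂ) - (a (k+1) : ℂ)) = ((a k - a (k+1) : ℝ) : ℂ) by push_cast; ring]
                rw [Complex.norm_real, Real.norm_of_nonneg (by linarith [hmono (Nat.le_succ k)])]
              rw [this]
          _ ≤ M + δ * b n := by
              rw [← Finset.sum_range_add_sum_Ico _ hn]
              refine add_le_add le_rfl ?_
              calc ∑ k ∈ Finset.Ico N n, (a k - a (k+1)) * ‖T k‖
                  ≤ ∑ k ∈ Finset.Ico N n, (a k - a (k+1)) * (δ * ((k:ℝ)+1)) := by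
                    refine Finset.sum_le_sum fun k hk => ?_
                    have hkN := (Finset.mem_Ico.mp hk).1
                    have := hmono (Nat.le_succ k)
                    have := hTk k hkN
                    nlinarith
                _ = δ * ∑ k ∈ Finset.Ico N n, (a k - a (k+1)) * ((k:ℝ)+1) := by
                    rw [Finset.mul_sum]; congr 1; ext k; ring
                _ ≤ δ * ∑ k ∈ Finset.range n, (a k - a (k+1)) * ((k:ℝ)+1) := by
                    refine mul_le_mul_of_nonneg_left ?_ hδ.le
                    apply Finset.sum_le_sum_of_subset_of_nonneg
                    · rw [Finset.range_eq_Ico]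
                      exact Finset.Ico_subset_Ico (Nat.zero_le N) le_rfl
                    · intro i _ _
                      have := hmono (Nat.le_succ i)
                      have hi1 : (0:ℝ) ≤ (i:ℝ)+1 := by positivity
                      nlinarith
                _ ≤ δ * b n := by
                    rw [bid n]
                    have h3 : 0 ≤ ((n:ℝ)+1) * a n := by
                      have := ha0 n
                      positivity
                    nlinarith
      calc ‖(a n : ℂ) * T n + ∑ k ∈ Finset.range n, ((a k : ℂ) - (a (k+1) : ℂ)) * T k‖
          ≤ ‖(a n : ℂ) * T n‖ + ‖∑ k ∈ Finset.range n, ((a k : ℂ) - (a (k+1) : ℂ)) * T k‖ :=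
            norm_add_le _ _
        _ ≤ K + δ * b n := by rw [hKdef]; linarith
    -- now conclude
    have hbig : ∀ᶠ n in atTop, b n ≥ max 1 (2*K/ε + 1) := hb.eventually_ge_atTop _
    filter_upwards [hbig, eventually_ge_atTop N] with n hbn hnN
    have hb1 : (1:ℝ) ≤ b n := le_trans (le_max_left _ _) hbn
    have hbK : 2*K/ε + 1 ≤ b n := le_trans (le_max_right _ _) hbn
    have hbpos : (0:ℝ) < b n := by linarith
    have hnorm : ‖(∑ k ∈ Finset.range (n+1), (a k : ℂ) * y k) / ((b n : ℝ) : ℂ)‖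
        = ‖∑ k ∈ Finset.range (n+1), (a k : ℂ) * y k‖ / b n := by
      rw [norm_div, Complex.norm_real, Real.norm_of_nonneg hbpos.le]
    rw [hnorm]
    have h1 := hest n hnN
    have hKb : K / b n ≤ ε/2 := by
      rw [div_le_iff₀ hbpos]
      have h2 : 2*K/ε ≤ b n - 1 := by linarith
      rw [div_le_iff₀ hε] at h2
      nlinarith
    have : ‖∑ k ∈ Finset.range (n+1), (a k : ℂ) * y k‖ / b n ≤ K / b n + δ := by
      rw [div_add' _ _ _ hbpos.ne', div_le_div_iff₀ hbpos hbpos]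
      nlinarith
    have hδε : δ < ε/2 := by rw [hδdef]; linarith
    calc ‖∑ k ∈ Finset.range (n+1), (a k : ℂ) * y k‖ / b n ≤ K / b n + δ := this
      _ < ε/2 + ε/2 := by linarith
      _ = ε := by ring
  -- assemble
  have hfin := hzero.add (tendsto_const_nhds (x := L) (f := atTop))
  rw [zero_add] at hfin
  apply hfin.congr'
  have hbig : ∀ᶠ n in atTop, b n ≥ 1 := hb.eventually_ge_atTop _
  filter_upwards [hbig] with n hbn
  have hbpos : (0:ℝ) < b n := by linarith
  have hbne : ((b n : ℝ) : ℂ) ≠ 0 := by exact_mod_cast hbpos.ne'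
  have hsum : ∑ k ∈ Finset.range (n+1), (a k : ℂ) * x k
      = ∑ k ∈ Finset.range (n+1), (a k : ℂ) * y k + ((b n : ℝ) : ℂ) * L := by
    have : ((b n : ℝ) : ℂ) = ∑ k ∈ Finset.range (n+1), ((a k : ℝ) : ℂ) := by
      rw [hbdef]; push_cast; ring
    rw [this, Finset.sum_mul, ← Finset.sum_add_distrib]
    congr 1; ext k
    simp [hydef]; ring
  show _ = _
  rw [hsum, add_div, mul_comm, mul_div_assoc, div_self hbne, mul_one]
end

section
/- Subsequence summation lemma: let φ : ℕ → ℝ_{>0} be increasing with φ(n) → ∞, let {a_k} ⊆ ℝ be such that the sequence (1/φ(n))·∑_{k=0}^n |a_k| is bounded, and let k_0 < k_1 < ⋯ be an infinite increasing sequence of positive integers such that φ(k_{n+1})/φ(k_n) → 1 and (1/φ(k_n))·∑_{k=k_{n-1}+1}^{k_n} |a_k| → 0. Defining k_{i_n} := min{k_i : k_i ≥ n}, one has (1/φ(n))∑_{k=0}^n a_k − (1/φ(k_{i_n}))∑_{k=0}^{k_{i_n}} a_k → 0 as n → ∞. -/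
open Filter Finset

/-!
Let `S n = ∑_{j ≤ n} a j` and `k p < n ≤ k (p+1) =: m`, so `m` is the subsequence term attached
to `n`. Since `S m = S n + T` with `T = ∑_{n < j ≤ m} a j`,
`S n / φ n - S m / φ m = (S n / φ n) (1 - φ n / φ m) - T / φ m`.
By boundedness and monotonicity of `φ` the first term is at most `C (1 - φ (k p) / φ (k (p+1)))`,
and `|T| / φ m` is at most the normalized gap sum over `(k p, k (p+1)]`; both tend to `0`
because `p → ∞` with `n`.
-/

section NextIndex

variable {k : ℕ → ℕ}

theorem le_apply_sInf_setOf_le (hk : StrictMono k) (n : ℕ) : n ≤ k (sInf {i | n ≤ k i}) :=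
  Nat.sInf_mem (s := {i | n ≤ k i}) ⟨n, hk.le_apply⟩

theorem apply_sInf_setOf_le_sub_one_lt {n : ℕ} (h : sInf {i | n ≤ k i} ≠ 0) :
    k (sInf {i | n ≤ k i} - 1) < n :=
  not_le.1 (Nat.notMem_of_lt_sInf (s := {i | n ≤ k i}) (Nat.sub_one_lt h))

theorem tendsto_sInf_setOf_le_atTop (hk : StrictMono k) :
    Tendsto (fun n => sInf {i | n ≤ k i}) atTop atTop := by
  refine tendsto_atTop.2 fun M => ?_
  filter_upwards [eventually_gt_atTop (k M)] with n hn
  by_contra! h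
  exact absurd ((le_apply_sInf_setOf_le hk n).trans (hk h).le) (not_le.2 hn)

end NextIndex

theorem sum_range_succ_eq_add_sum_Ioc (a : ℕ → ℝ) {n m : ℕ} (h : n ≤ m) :
    ∑ j ∈ range (m + 1), a j = ∑ j ∈ range (n + 1), a j + ∑ j ∈ Ioc n m, a j := by
  rw [← Ico_add_one_add_one_eq_Ioc, sum_range_add_sum_Ico a (by omega)]

theorem abs_partialSum_div_sub_partialSum_div_le {φ : ℕ → ℝ} (hφpos : ∀ n, 0 < φ n)
    (hφmono : Monotone φ) (a : ℕ → ℝ) {C : ℝ} {l n m : ℕ}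
    (hC : (∑ j ∈ range (n + 1), |a j|) / φ n ≤ C) (hln : l ≤ n) (hnm : n ≤ m) :
    |(∑ j ∈ range (n + 1), a j) / φ n - (∑ j ∈ range (m + 1), a j) / φ m|
      ≤ C * (1 - φ l / φ m) + (∑ j ∈ Ioc l m, |a j|) / φ m := by
  set S := ∑ j ∈ range (n + 1), a j
  set T := ∑ j ∈ Ioc n m, a j
  have hφn := hφpos n
  have hφm := hφpos m
  have hsplit : S / φ n - (S + T) / φ m = S / φ n * (1 - φ n / φ m) - T / φ m := by
    field_simp
    ring
  have hS : |S / φ n| ≤ C := by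
    rw [abs_div, abs_of_pos hφn]
    exact (div_le_div_of_nonneg_right (abs_sum_le_sum_abs _ _) hφn.le).trans hC
  have hfactor_nonneg : 0 ≤ 1 - φ n / φ m := sub_nonneg.2 (div_le_one_of_le₀ (hφmono hnm) hφm.le)
  have hfactor : 1 - φ n / φ m ≤ 1 - φ l / φ m :=
    sub_le_sub_left (div_le_div_of_nonneg_right (hφmono hln) hφm.le) _
  have hT : |T / φ m| ≤ (∑ j ∈ Ioc l m, |a j|) / φ m := by
    rw [abs_div, abs_of_pos hφm]
    refine div_le_div_of_nonneg_right ((abs_sum_le_sum_abs _ _).trans ?_) hφm.le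
    exact sum_le_sum_of_subset_of_nonneg (Ioc_subset_Ioc_left hln) fun j _ _ => abs_nonneg _
  rw [sum_range_succ_eq_add_sum_Ioc a hnm, hsplit]
  calc |S / φ n * (1 - φ n / φ m) - T / φ m|
      ≤ |S / φ n| * (1 - φ n / φ m) + |T / φ m| :=
        (abs_sub _ _).trans_eq (by rw [abs_mul, abs_of_nonneg hfactor_nonneg])
    _ ≤ C * (1 - φ l / φ m) + (∑ j ∈ Ioc l m, |a j|) / φ m := by
        gcongr
        exact (abs_nonneg _).trans hS

theorem stmt_4_general (φ : ℕ → ℝ) (hφpos : ∀ n, 0 < φ n) (hφmono : Monotone φ)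
    (a : ℕ → ℝ)
    (habdd : ∃ C : ℝ, ∀ n, (∑ j ∈ Finset.range (n + 1), |a j|) / φ n ≤ C)
    (k : ℕ → ℕ) (hk : StrictMono k)
    (hkratio : Tendsto (fun n => φ (k (n + 1)) / φ (k n)) atTop (nhds 1))
    (hgap : Tendsto (fun n => (∑ j ∈ Finset.Ioc (k n) (k (n + 1)), |a j|) / φ (k (n + 1)))
      atTop (nhds 0)) :
    Tendsto (fun n =>
        (∑ j ∈ Finset.range (n + 1), a j) / φ n -
        (∑ j ∈ Finset.range (k (sInf {i | n ≤ k i}) + 1), a j) / φ (k (sInf {i | n ≤ k i})))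
      atTop (nhds 0) := by
  obtain ⟨C, hC⟩ := habdd
  have hbound : Tendsto (fun p => C * (1 - φ (k p) / φ (k (p + 1))) +
      (∑ j ∈ Ioc (k p) (k (p + 1)), |a j|) / φ (k (p + 1))) atTop (nhds 0) := by
    have hratio : Tendsto (fun p => φ (k p) / φ (k (p + 1))) atTop (nhds 1) := by
      simpa only [inv_div, inv_one] using hkratio.inv₀ one_ne_zero
    simpa using (((tendsto_const_nhds (x := (1 : ℝ))).sub hratio).const_mul C).add hgap
  have hnext := tendsto_sInf_setOf_le_atTop hk
  refine squeeze_zero_norm' ?_ (hbound.comp ((tendsto_sub_atTop_nat 1).comp hnext))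
  filter_upwards [hnext.eventually_ne_atTop 0] with n hn
  have hsucc : sInf {i | n ≤ k i} - 1 + 1 = sInf {i | n ≤ k i} := Nat.sub_add_cancel
    (Nat.one_le_iff_ne_zero.2 hn)
  simp only [Function.comp_apply, hsucc, Real.norm_eq_abs]
  exact abs_partialSum_div_sub_partialSum_div_le hφpos hφmono a (hC n)
    (apply_sInf_setOf_le_sub_one_lt hn).le (le_apply_sInf_setOf_le hk n)

/-- Subsequence summation lemma: let `φ : ℕ → ℝ` be increasing, strictly positive and tending
to infinity, let `a` be a real sequence whose `φ`-normalized absolute partial sums are bounded,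
and let `k` be a strictly increasing sequence of positive integers such that
`φ (k (n+1)) / φ (k n) → 1` and the normalized sums over the gaps tend to `0`.  Writing
`k (sInf {i | n ≤ k i})` for the least element of the subsequence that is `≥ n`, the normalized
partial sum up to `n` differs from the one up to `k (sInf {i | n ≤ k i})` by `o(1)`. -/
theorem stmt_4 (φ : ℕ → ℝ) (hφpos : ∀ n, 0 < φ n) (hφmono : Monotone φ)
    (hφdiv : Tendsto φ atTop atTop)
    (a : ℕ → ℝ)
    (habdd : ∃ C : ℝ, ∀ n, (∑ j ∈ Finset.range (n + 1), |a j|) / φ n ≤ C)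
    (k : ℕ → ℕ) (hk : StrictMono k) (hkpos : ∀ i, 0 < k i)
    (hkratio : Tendsto (fun n => φ (k (n + 1)) / φ (k n)) atTop (nhds 1))
    (hgap : Tendsto (fun n => (∑ j ∈ Finset.Ioc (k n) (k (n + 1)), |a j|) / φ (k (n + 1)))
      atTop (nhds 0)) :
    Tendsto (fun n =>
        (∑ j ∈ Finset.range (n + 1), a j) / φ n -
        (∑ j ∈ Finset.range (k (sInf {i | n ≤ k i}) + 1), a j) / φ (k (sInf {i | n ≤ k i})))
      atTop (nhds 0) :=
  stmt_4_general φ hφpos hφmono a habdd k hk hkratio hgap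
end

section
/- Logarithmic mean versus Cesàro mean: for any bounded sequence x ∈ ℓ_∞, defining the logarithmic mean M(x)_n := (1/log(n+2))·∑_{k=0}^n x_k/(k+1) and the Cesàro mean C(x)_n := (1/(n+1))·∑_{k=0}^n x_k, one has M(x)_n − (M∘C)(x)_n → 0 as n → ∞. -/
open Filter

open Finset

private lemma frac_aux (a S y : ℂ) (h1 : a+1 ≠ 0) (h2 : a+2 ≠ 0) :
    y/(a+2) - (S+y)/(a+2)^2 + a*S/(a+1)^2 + S/((a+1)^2*(a+2)) = (a+1)*(S+y)/(a+2)^2 := by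
  have h1s : (a+1)^2 ≠ 0 := pow_ne_zero 2 h1
  have h2s : (a+2)^2 ≠ 0 := pow_ne_zero 2 h2
  rw [div_sub_div _ _ h2 h2s, div_add_div _ _ (mul_ne_zero h2 h2s) h1s,
      div_add_div _ _ (mul_ne_zero (mul_ne_zero h2 h2s) h1s) (mul_ne_zero h1s h2),
      div_eq_div_iff (mul_ne_zero (mul_ne_zero (mul_ne_zero h2 h2s) h1s) (mul_ne_zero h1s h2)) h2s]
  ring

private lemma abel_key (x : ℕ → ℂ) (n : ℕ) :
    (∑ k ∈ range (n+1), x k / ((k:ℂ)+1))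
      - ∑ k ∈ range (n+1), (∑ j ∈ range (k+1), x j) / ((k:ℂ)+1)^2
    = (n:ℂ) * (∑ j ∈ range (n+1), x j) / ((n:ℂ)+1)^2
      - ∑ k ∈ range n, (∑ j ∈ range (k+1), x j) / (((k:ℂ)+1)^2 * ((k:ℂ)+2)) := by
  induction n with
  | zero => simp
  | succ n ih =>
    have h1 : ((n:ℂ)+1) ≠ 0 := Nat.cast_add_one_ne_zero n
    have h2 : ((n:ℂ)+2) ≠ 0 := by
      have h := Nat.cast_add_one_ne_zero (R := ℂ) (n+1)
      push_cast at h
      intro hc; exact h (by linear_combination hc)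
    rw [sum_range_succ (f := fun k => x k / ((k:ℂ)+1)),
        sum_range_succ (f := fun k => (∑ j ∈ range (k+1), x j) / ((k:ℂ)+1)^2),
        sum_range_succ (f := fun k => (∑ j ∈ range (k+1), x j) / (((k:ℂ)+1)^2 * ((k:ℂ)+2)))]
    rw [sum_range_succ (f := x) (n := n+1)]
    push_cast
    linear_combination ih + frac_aux (n:ℂ) (∑ j ∈ range (n+1), x j) (x (n+1)) h1 h2

private lemma tele (n : ℕ) :
    ∑ k ∈ range n, (1:ℝ)/(((k:ℝ)+1)*((k:ℝ)+2)) = 1 - 1/((n:ℝ)+1) := by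
  induction n with
  | zero => simp
  | succ n ih =>
    rw [sum_range_succ, ih]
    have h1 : ((n:ℝ)+1) ≠ 0 := by positivity
    have h2 : ((n:ℝ)+2) ≠ 0 := by positivity
    push_cast
    field_simp
    ring

/-- The logarithmic mean `M(x)_n = (1/log(n+2)) ∑_{k=0}^n x k / (k+1)`. -/
noncomputable def logMean (x : ℕ → ℂ) (n : ℕ) : ℂ :=
  (∑ k ∈ Finset.range (n + 1), x k / ((k : ℂ) + 1)) / ((Real.log ((n : ℝ) + 2) : ℝ) : ℂ)

/-- The Cesàro mean `C(x)_n = (1/(n+1)) ∑_{k=0}^n x k`. -/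
noncomputable def cesaroMean (x : ℕ → ℂ) (n : ℕ) : ℂ :=
  (∑ k ∈ Finset.range (n + 1), x k) / ((n : ℂ) + 1)

/-- For any bounded sequence `x`, the logarithmic mean of `x` and the logarithmic mean of the
Cesàro means of `x` are asymptotically equal: `M(x)_n - (M ∘ C)(x)_n → 0`. -/
theorem stmt_5 (x : ℕ → ℂ) (hx : ∃ C : ℝ, ∀ n, ‖x n‖ ≤ C) :
    Tendsto (fun n => logMean x n - logMean (cesaroMean x) n) atTop (nhds 0) := by
  obtain ⟨C, hC⟩ := hx
  set C' : ℝ := max C 0 with hC'def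
  have hC0 : 0 ≤ C' := le_max_right _ _
  have hC' : ∀ n, ‖x n‖ ≤ C' := fun n => (hC n).trans (le_max_left _ _)
  -- partial sums bound
  have hS : ∀ k : ℕ, ‖∑ j ∈ range (k+1), x j‖ ≤ C' * ((k:ℝ)+1) := by
    intro k
    calc ‖∑ j ∈ range (k+1), x j‖ ≤ ∑ j ∈ range (k+1), ‖x j‖ := norm_sum_le _ _
      _ ≤ ∑ j ∈ range (k+1), C' := Finset.sum_le_sum fun j _ => hC' j
      _ = C' * ((k:ℝ)+1) := by rw [Finset.sum_const, Finset.card_range]; push_cast [nsmul_eq_mul]; ring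
  -- norm of complex casts
  have hnorm1 : ∀ k : ℕ, ‖((k:ℂ)+1)‖ = (k:ℝ)+1 := by
    intro k
    have : ((k:ℂ)+1) = ((k+1 : ℕ) : ℂ) := by push_cast; ring
    rw [this, Complex.norm_natCast]; push_cast; ring
  have hnorm2 : ∀ k : ℕ, ‖((k:ℂ)+2)‖ = (k:ℝ)+2 := by
    intro k
    have : ((k:ℂ)+2) = ((k+2 : ℕ) : ℂ) := by push_cast; ring
    rw [this, Complex.norm_natCast]; push_cast; ring
  -- bound on the RHS of abel_key
  have hT : ∀ n : ℕ, ‖(n:ℂ) * (∑ j ∈ range (n+1), x j) / ((n:ℂ)+1)^2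
      - ∑ k ∈ range n, (∑ j ∈ range (k+1), x j) / (((k:ℂ)+1)^2 * ((k:ℂ)+2))‖ ≤ 2 * C' := by
    intro n
    have hb1 : ‖(n:ℂ) * (∑ j ∈ range (n+1), x j) / ((n:ℂ)+1)^2‖ ≤ C' := by
      rw [norm_div, norm_mul, norm_pow, hnorm1, Complex.norm_natCast]
      have hpos : (0:ℝ) < ((n:ℝ)+1)^2 := by positivity
      rw [div_le_iff₀ hpos]
      calc (n:ℝ) * ‖∑ j ∈ range (n+1), x j‖ ≤ (n:ℝ) * (C' * ((n:ℝ)+1)) := by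
            exact mul_le_mul_of_nonneg_left (hS n) (Nat.cast_nonneg n)
        _ ≤ C' * ((n:ℝ)+1)^2 := by nlinarith [Nat.cast_nonneg (α := ℝ) n]
    have hb2 : ‖∑ k ∈ range n, (∑ j ∈ range (k+1), x j) / (((k:ℂ)+1)^2 * ((k:ℂ)+2))‖ ≤ C' := by
      calc ‖∑ k ∈ range n, (∑ j ∈ range (k+1), x j) / (((k:ℂ)+1)^2 * ((k:ℂ)+2))‖
          ≤ ∑ k ∈ range n, ‖(∑ j ∈ range (k+1), x j) / (((k:ℂ)+1)^2 * ((k:ℂ)+2))‖ :=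
            norm_sum_le _ _
        _ ≤ ∑ k ∈ range n, C' * (1/(((k:ℝ)+1)*((k:ℝ)+2))) := by
            refine Finset.sum_le_sum fun k _ => ?_
            rw [norm_div, norm_mul, norm_pow, hnorm1, hnorm2]
            have hpos : (0:ℝ) < ((k:ℝ)+1)^2 * ((k:ℝ)+2) := by positivity
            rw [div_le_iff₀ hpos]
            calc ‖∑ j ∈ range (k+1), x j‖ ≤ C' * ((k:ℝ)+1) := hS k
              _ = C' * (1/(((k:ℝ)+1)*((k:ℝ)+2))) * (((k:ℝ)+1)^2 * ((k:ℝ)+2)) := by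
                  field_simp
        _ = C' * (1 - 1/((n:ℝ)+1)) := by rw [← Finset.mul_sum, tele]
        _ ≤ C' * 1 := by
            refine mul_le_mul_of_nonneg_left ?_ hC0
            have : 0 ≤ 1/((n:ℝ)+1) := by positivity
            linarith
        _ = C' := mul_one _
    calc ‖_ - _‖ ≤ ‖(n:ℂ) * (∑ j ∈ range (n+1), x j) / ((n:ℂ)+1)^2‖
          + ‖∑ k ∈ range n, (∑ j ∈ range (k+1), x j) / (((k:ℂ)+1)^2 * ((k:ℂ)+2))‖ :=
        norm_sub_le _ _
      _ ≤ 2 * C' := by linarith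
  -- rewrite the difference
  have hdiff : ∀ n : ℕ, logMean x n - logMean (cesaroMean x) n
      = ((n:ℂ) * (∑ j ∈ range (n+1), x j) / ((n:ℂ)+1)^2
        - ∑ k ∈ range n, (∑ j ∈ range (k+1), x j) / (((k:ℂ)+1)^2 * ((k:ℂ)+2)))
        / ((Real.log ((n:ℝ)+2) : ℝ) : ℂ) := by
    intro n
    unfold logMean cesaroMean
    rw [div_sub_div_same, ← abel_key]
    congr 2
    refine Finset.sum_congr rfl fun k _ => ?_
    rw [div_div, ← sq]
  -- squeeze
  rw [tendsto_zero_iff_norm_tendsto_zero]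
  have hlogpos : ∀ n : ℕ, 0 < Real.log ((n:ℝ)+2) := by
    intro n
    apply Real.log_pos
    have : (0:ℝ) ≤ (n:ℝ) := Nat.cast_nonneg n
    linarith
  refine squeeze_zero (fun n => norm_nonneg _) (g := fun n : ℕ => 2 * C' / Real.log ((n:ℝ)+2)) ?_ ?_
  · intro n
    rw [hdiff n, norm_div, Complex.norm_real, Real.norm_eq_abs,
        abs_of_pos (hlogpos n)]
    exact div_le_div_of_nonneg_right (hT n) (hlogpos n).le
  · apply Tendsto.div_atTop tendsto_const_nhds
    exact Real.tendsto_log_atTop.comp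
      (tendsto_atTop_add_const_right _ 2 tendsto_natCast_atTop_atTop)
end

section
/- Divided difference contour-integral representation: for f holomorphic on a domain containing the points λ_0, …, λ_n ∈ ℂ and γ a contour encircling λ_0, …, λ_n counterclockwise within the domain, the divided difference satisfies f^{[n]}(λ_0, …, λ_n) = (1/(2πi))·∮_γ f(z)·(z − λ_0)^{-1}⋯(z − λ_n)^{-1} dz. -/
open Filter

/-- The divided difference `f^{[n]}(λ₀, …, λₙ)`, defined recursively by
`f^{[0]}(λ) = f λ` and
`f^{[n]}(λ₀, …, λₙ) = (f^{[n-1]}(λ₀, …, λ_{n-1}) - f^{[n-1]}(λ₁, …, λₙ)) / (λ₀ - λₙ)`. -/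
noncomputable def divDiff (f : ℂ → ℂ) : (n : ℕ) → (Fin (n + 1) → ℂ) → ℂ
  | 0, lam => f (lam 0)
  | n + 1, lam =>
      (divDiff f n (fun i => lam i.castSucc) - divDiff f n (fun i => lam i.succ)) /
        (lam 0 - lam (Fin.last (n + 1)))

lemma divDiff_aux (f : ℂ → ℂ) (c : ℂ) (R : ℝ) (hR : 0 < R)
    (U : Set ℂ) (hsub : Metric.closedBall c R ⊆ U)
    (hf : DifferentiableOn ℂ f U) :
    ∀ (n : ℕ) (lam : Fin (n + 1) → ℂ), Function.Injective lam →
      (∀ i, lam i ∈ Metric.ball c R) →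
      (∮ z in C(c, R), f z * ∏ i, (z - lam i)⁻¹) =
        (2 * Real.pi * Complex.I) * divDiff f n lam := by
  intro n
  induction n with
  | zero =>
    intro lam _ hmem
    have h0 : (∮ z in C(c, R), (z - lam 0)⁻¹ • f z) =
        (2 * Real.pi * Complex.I) • f (lam 0) :=
      (hf.mono hsub).circleIntegral_sub_inv_smul (hmem 0)
    simp only [smul_eq_mul] at h0
    calc (∮ z in C(c, R), f z * ∏ i, (z - lam i)⁻¹)
        = ∮ z in C(c, R), (z - lam 0)⁻¹ * f z := by
          congr 1; funext z; rw [Fin.prod_univ_one]; ring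
      _ = (2 * Real.pi * Complex.I) * f (lam 0) := h0
      _ = (2 * Real.pi * Complex.I) * divDiff f 0 lam := rfl
  | succ n ih =>
    intro lam hinj hmem
    set μ : Fin (n + 1) → ℂ := fun i => lam i.castSucc with hμ
    set ν : Fin (n + 1) → ℂ := fun i => lam i.succ with hν
    have hμinj : Function.Injective μ := fun i j h => by
      simpa [Fin.castSucc_inj] using Fin.castSucc_injective _ (hinj h)
    have hνinj : Function.Injective ν := fun i j h => by
      simpa using Fin.succ_injective _ (hinj h)
    have hμmem : ∀ i, μ i ∈ Metric.ball c R := fun i => hmem _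
    have hνmem : ∀ i, ν i ∈ Metric.ball c R := fun i => hmem _
    have ihμ := ih μ hμinj hμmem
    have ihν := ih ν hνinj hνmem
    set a : ℂ := lam 0 - lam (Fin.last (n + 1)) with ha
    have ha0 : a ≠ 0 := sub_ne_zero.2 (fun h => by
      have := hinj h
      exact absurd this (by simp [Fin.ext_iff]))
    -- z on the sphere is distinct from all lam i
    have hz_ne : ∀ z ∈ Metric.sphere c R, ∀ w ∈ Metric.ball c R, z - w ≠ 0 := by
      intro z hz w hw
      refine sub_ne_zero.2 fun h => ?_
      rw [Metric.mem_sphere] at hz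
      rw [Metric.mem_ball] at hw
      rw [h] at hz
      exact absurd hz (ne_of_lt hw)
    -- pointwise identity on the sphere
    have key : ∀ z ∈ Metric.sphere c R,
        f z * ∏ i, (z - lam i)⁻¹ =
          a⁻¹ • (f z * ∏ i, (z - μ i)⁻¹ - f z * ∏ i, (z - ν i)⁻¹) := by
      intro z hz
      have h0 : z - lam 0 ≠ 0 := hz_ne z hz _ (hmem 0)
      have hl : z - lam (Fin.last (n + 1)) ≠ 0 := hz_ne z hz _ (hmem _)
      have hall : ∀ i : Fin (n + 2), z - lam i ≠ 0 := fun i => hz_ne z hz _ (hmem i)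
      have hPf : (∏ i, (z - μ i)) ≠ 0 := Finset.prod_ne_zero_iff.2 fun i _ => hall _
      have hPb : (∏ i, (z - ν i)) ≠ 0 := Finset.prod_ne_zero_iff.2 fun i _ => hall _
      have e1 : (∏ i : Fin (n + 2), (z - lam i)) =
          (∏ i, (z - μ i)) * (z - lam (Fin.last (n + 1))) := by
        rw [Fin.prod_univ_castSucc]
      have e2 : (∏ i : Fin (n + 2), (z - lam i)) =
          (z - lam 0) * (∏ i, (z - ν i)) := by
        rw [Fin.prod_univ_succ]
      have hPall : (∏ i : Fin (n + 2), (z - lam i)) ≠ 0 :=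
        Finset.prod_ne_zero_iff.2 fun i _ => hall _
      have hμinv : (∏ i, (z - μ i))⁻¹ =
          (z - lam (Fin.last (n + 1))) * (∏ i : Fin (n + 2), (z - lam i))⁻¹ := by
        rw [e1]; field_simp
      have hνinv : (∏ i, (z - ν i))⁻¹ =
          (z - lam 0) * (∏ i : Fin (n + 2), (z - lam i))⁻¹ := by
        rw [e2]; field_simp
      rw [smul_eq_mul]
      simp only [Finset.prod_inv_distrib]
      rw [hμinv, hνinv, ha]
      have ha0' : lam 0 - lam (Fin.last (n + 1)) ≠ 0 := ha ▸ ha0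
      field_simp
      ring
    -- integrability of the two pieces
    have hcont : ∀ (m : ℕ) (t : Fin (m + 1) → ℂ), (∀ i, t i ∈ Metric.ball c R) →
        CircleIntegrable (fun z => f z * ∏ i, (z - t i)⁻¹) c R := by
      intro m t ht
      refine ContinuousOn.circleIntegrable hR.le ?_
      refine ContinuousOn.mul (hf.continuousOn.mono ?_) ?_
      · exact (Metric.sphere_subset_closedBall).trans hsub
      · refine continuousOn_finset_prod _ fun i _ => ?_
        exact ((continuousOn_id.sub continuousOn_const).inv₀
          fun z hz => hz_ne z hz _ (ht i))
    have hIμ := hcont n μ hμmem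
    have hIν := hcont n ν hνmem
    calc (∮ z in C(c, R), f z * ∏ i, (z - lam i)⁻¹)
        = ∮ z in C(c, R),
            a⁻¹ • (f z * ∏ i, (z - μ i)⁻¹ - f z * ∏ i, (z - ν i)⁻¹) :=
          circleIntegral.integral_congr hR.le fun z hz => key z hz
      _ = a⁻¹ • ∮ z in C(c, R),
            (f z * ∏ i, (z - μ i)⁻¹ - f z * ∏ i, (z - ν i)⁻¹) :=
          circleIntegral.integral_smul _ _ _ _
      _ = a⁻¹ • ((∮ z in C(c, R), f z * ∏ i, (z - μ i)⁻¹) -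
            ∮ z in C(c, R), f z * ∏ i, (z - ν i)⁻¹) := by
          rw [circleIntegral.integral_sub hIμ hIν]
      _ = (2 * Real.pi * Complex.I) * divDiff f (n + 1) lam := by
          rw [ihμ, ihν, smul_eq_mul]
          show a⁻¹ * _ = _ * ((divDiff f n μ - divDiff f n ν) / a)
          field_simp

/-- Contour-integral representation of divided differences: if `f` is holomorphic on an open
set containing the closed disc of radius `R` about `c`, and `λ₀, …, λₙ` are distinct points
inside this disc, then
`f^{[n]}(λ₀, …, λₙ) = (2πi)⁻¹ ∮_{|z-c|=R} f z · ∏ⱼ (z - λⱼ)⁻¹ dz`. -/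
theorem stmt_7 (f : ℂ → ℂ) (c : ℂ) (R : ℝ) (hR : 0 < R)
    (U : Set ℂ) (hU : IsOpen U) (hsub : Metric.closedBall c R ⊆ U)
    (hf : DifferentiableOn ℂ f U)
    (n : ℕ) (lam : Fin (n + 1) → ℂ) (hinj : Function.Injective lam)
    (hmem : ∀ i, lam i ∈ Metric.ball c R) :
    divDiff f n lam = (2 * Real.pi * Complex.I)⁻¹ *
      ∮ z in C(c, R), f z * ∏ i, (z - lam i)⁻¹ := by
  rw [divDiff_aux f c R hR U hsub hf n lam hinj hmem,
    inv_mul_cancel_left₀ Complex.two_pi_I_ne_zero]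
end

section
/- Leibniz rule for divided differences: for functions f = g·h on ℝ (or ℂ) and points λ_0, …, λ_n, one has f^{[n]}(λ_0, …, λ_n) = ∑_{l=0}^n g^{[l]}(λ_0, …, λ_l)·h^{[n−l]}(λ_l, …, λ_n). -/
/-- ℕ-indexed divided difference over the points `u 0, …, u n`. -/
noncomputable def divDiffN (f : ℂ → ℂ) : ℕ → (ℕ → ℂ) → ℂ
  | 0, u => f (u 0)
  | n + 1, u => (divDiffN f n u - divDiffN f n (fun i => u (i + 1))) / (u 0 - u (n + 1))

lemma divDiff_eq_divDiffN (f : ℂ → ℂ) : ∀ (n : ℕ) (lam : Fin (n + 1) → ℂ) (u : ℕ → ℂ),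
    (∀ i : Fin (n + 1), u i.val = lam i) → divDiff f n lam = divDiffN f n u := by
  intro n
  induction n with
  | zero =>
    intro lam u hu
    simpa [divDiff, divDiffN] using congrArg f (hu 0).symm
  | succ n ih =>
    intro lam u hu
    simp only [divDiff, divDiffN]
    have h0 : u 0 = lam 0 := by simpa using hu 0
    have hl : u (n + 1) = lam (Fin.last (n + 1)) := by simpa using hu (Fin.last (n + 1))
    rw [ih (fun i => lam i.castSucc) u (fun i => by simpa using hu i.castSucc),
        ih (fun i => lam i.succ) (fun i => u (i + 1)) (fun i => by simpa using hu i.succ),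
        h0, hl]

/-- Leibniz rule for the ℕ-indexed divided difference. -/
lemma leibnizN (g h : ℂ → ℂ) : ∀ (n : ℕ) (u : ℕ → ℂ),
    (∀ i j, i ≤ n → j ≤ n → u i = u j → i = j) →
    divDiffN (fun z => g z * h z) n u =
      ∑ l ∈ Finset.range (n + 1),
        divDiffN g l u * divDiffN h (n - l) (fun i => u (l + i)) := by
  intro n
  induction n with
  | zero =>
    intro u _
    simp [divDiffN]
  | succ n ih =>
    intro u hinj
    have hA := ih u (fun i j hi hj e => hinj i j (by omega) (by omega) e)
    have hB := ih (fun i => u (i + 1)) (fun i j hi hj e => by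
      have := hinj (i + 1) (j + 1) (by omega) (by omega) e; omega)
    have hd : u 0 - u (n + 1) ≠ 0 := sub_ne_zero.mpr (fun e => by
      have := hinj 0 (n + 1) (by omega) le_rfl e; omega)
    have claim1 : ∀ l ≤ n, divDiffN g (l + 1) u * (u 0 - u (l + 1)) =
        divDiffN g l u - divDiffN g l (fun i => u (i + 1)) := by
      intro l hl
      have hne : u 0 - u (l + 1) ≠ 0 := sub_ne_zero.mpr (fun e => by
        have := hinj 0 (l + 1) (by omega) (by omega) e; omega)
      simp only [divDiffN]
      rw [div_mul_cancel₀ _ hne]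
    have claim2 : ∀ l ≤ n, divDiffN h (n + 1 - l) (fun i => u (l + i)) * (u l - u (n + 1)) =
        divDiffN h (n - l) (fun i => u (l + i)) -
        divDiffN h (n - l) (fun i => u (l + 1 + i)) := by
      intro l hl
      have hnl : n + 1 - l = (n - l) + 1 := by omega
      have hne : u l - u (n + 1) ≠ 0 := sub_ne_zero.mpr (fun e => by
        have := hinj l (n + 1) (by omega) le_rfl e; omega)
      rw [hnl]
      simp only [divDiffN]
      have e1 : (fun i => u (l + (i + 1))) = (fun i => u (l + 1 + i)) := by
        funext i; congr 1; omega
      have e2 : l + 0 = l := by omega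
      have e3 : l + (n - l + 1) = n + 1 := by omega
      rw [e1, e2, e3, div_mul_cancel₀ _ hne]
    have claim3 : ∀ l ≤ n, divDiffN h (n + 1 - (l + 1)) (fun i => u (l + 1 + i)) =
        divDiffN h (n - l) (fun i => u (l + 1 + i)) := by
      intro l hl
      have : n + 1 - (l + 1) = n - l := by omega
      rw [this]
    have key : (∑ l ∈ Finset.range (n + 2),
          divDiffN g l u * divDiffN h (n + 1 - l) (fun i => u (l + i))) * (u 0 - u (n + 1)) =
        (∑ l ∈ Finset.range (n + 1),
          divDiffN g l u * divDiffN h (n - l) (fun i => u (l + i))) -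
        (∑ l ∈ Finset.range (n + 1),
          divDiffN g l (fun i => u (i + 1)) * divDiffN h (n - l) (fun i => u (l + 1 + i))) := by
      have expand : (∑ l ∈ Finset.range (n + 2),
            divDiffN g l u * divDiffN h (n + 1 - l) (fun i => u (l + i))) * (u 0 - u (n + 1)) =
          (∑ l ∈ Finset.range (n + 2),
            (divDiffN g l u * (u 0 - u l)) * divDiffN h (n + 1 - l) (fun i => u (l + i))) +
          (∑ l ∈ Finset.range (n + 2),
            divDiffN g l u * (divDiffN h (n + 1 - l) (fun i => u (l + i)) * (u l - u (n + 1)))) := by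
        rw [Finset.sum_mul, ← Finset.sum_add_distrib]
        exact Finset.sum_congr rfl (fun l _ => by ring)
      rw [expand,
        Finset.sum_range_succ' (fun l =>
          (divDiffN g l u * (u 0 - u l)) * divDiffN h (n + 1 - l) (fun i => u (l + i))) (n + 1),
        Finset.sum_range_succ (fun l =>
          divDiffN g l u * (divDiffN h (n + 1 - l) (fun i => u (l + i)) * (u l - u (n + 1)))) (n + 1)]
      simp only [sub_self, mul_zero, zero_mul, add_zero, zero_add]
      have s1 : ∀ l ∈ Finset.range (n + 1),
          (divDiffN g (l + 1) u * (u 0 - u (l + 1))) *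
            divDiffN h (n + 1 - (l + 1)) (fun i => u (l + 1 + i)) =
          (divDiffN g l u - divDiffN g l (fun i => u (i + 1))) *
            divDiffN h (n - l) (fun i => u (l + 1 + i)) := by
        intro l hl
        rw [Finset.mem_range] at hl
        rw [claim1 l (by omega), claim3 l (by omega)]
      have s2 : ∀ l ∈ Finset.range (n + 1),
          divDiffN g l u * (divDiffN h (n + 1 - l) (fun i => u (l + i)) * (u l - u (n + 1))) =
          divDiffN g l u * (divDiffN h (n - l) (fun i => u (l + i)) -
            divDiffN h (n - l) (fun i => u (l + 1 + i))) := by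
        intro l hl
        rw [Finset.mem_range] at hl
        rw [claim2 l (by omega)]
      rw [Finset.sum_congr rfl s1, Finset.sum_congr rfl s2, ← Finset.sum_add_distrib,
        ← Finset.sum_sub_distrib]
      exact Finset.sum_congr rfl (fun l _ => by ring)
    have hB' : divDiffN (fun z => g z * h z) n (fun i => u (i + 1)) =
        ∑ l ∈ Finset.range (n + 1),
          divDiffN g l (fun i => u (i + 1)) * divDiffN h (n - l) (fun i => u (l + 1 + i)) := by
      rw [hB]
      refine Finset.sum_congr rfl (fun l _ => ?_)
      have e : (fun i => u (l + i + 1)) = (fun i => u (l + 1 + i)) := by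
        funext i; congr 1; omega
      rw [e]
    show (divDiffN (fun z => g z * h z) n u -
        divDiffN (fun z => g z * h z) n (fun i => u (i + 1))) / (u 0 - u (n + 1)) = _
    rw [hA, hB', div_eq_iff hd, ← key]
/-- Leibniz rule for divided differences: if `f = g · h` pointwise and `λ₀, …, λₙ` are
distinct points, then
`f^{[n]}(λ₀, …, λₙ) = ∑_{l=0}^n g^{[l]}(λ₀, …, λ_l) · h^{[n-l]}(λ_l, …, λₙ)`. -/
theorem stmt_8 (f g h : ℂ → ℂ) (hfgh : ∀ z, f z = g z * h z)
    (n : ℕ) (lam : Fin (n + 1) → ℂ) (hinj : Function.Injective lam) :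
    divDiff f n lam = ∑ l : Fin (n + 1),
      divDiff g l.val (fun i : Fin (l.val + 1) => lam (Fin.castLE l.isLt i)) *
      divDiff h (n - l.val) (fun i : Fin (n - l.val + 1) =>
        lam ⟨l.val + i.val, by have := i.isLt; have := l.isLt; omega⟩) := by
  have hf : f = fun z => g z * h z := funext hfgh
  subst hf
  set u : ℕ → ℂ := fun i => lam ⟨min i n, by omega⟩ with hu
  have huval : ∀ i (hi : i ≤ n), u i = lam ⟨i, by omega⟩ := by
    intro i hi
    simp only [hu]
    congr 1
    exact Fin.ext (by simp [Nat.min_eq_left hi])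
  have hinj' : ∀ i j, i ≤ n → j ≤ n → u i = u j → i = j := by
    intro i j hi hj e
    rw [huval i hi, huval j hj] at e
    have := hinj e
    simpa using congrArg Fin.val this
  rw [divDiff_eq_divDiffN _ n lam u (fun i => huval i.val (by omega)),
    leibnizN g h n u hinj', Finset.sum_range (fun l =>
      divDiffN g l u * divDiffN h (n - l) (fun i => u (l + i)))]
  refine Finset.sum_congr rfl (fun l _ => ?_)
  have h1 : divDiff g l.val (fun i : Fin (l.val + 1) => lam (Fin.castLE l.isLt i)) =
      divDiffN g l.val u :=
    divDiff_eq_divDiffN g l.val _ u (fun i => by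
      rw [huval i.val (by omega)]
      exact congrArg lam (Fin.ext rfl))
  have h2 : divDiff h (n - l.val) (fun i : Fin (n - l.val + 1) =>
        lam ⟨l.val + i.val, by have := i.isLt; have := l.isLt; omega⟩) =
      divDiffN h (n - l.val) (fun i => u (l.val + i)) :=
    divDiff_eq_divDiffN h (n - l.val) _ (fun i => u (l.val + i)) (fun i => by
      show u (l.val + i.val) = _
      rw [huval (l.val + i.val) (by omega)])
  rw [h1, h2]
end

section
/- Abelian limit lemma: let F : (0, 1] → ℂ be measurable and bounded on compact subsets of (0,1], with F(r) ∼ c/r as r → 0 (i.e. r·F(r) → c). Then (s−1)·s·∫_0^1 r^{s−1} F(r) dr → c as s ↓ 1. -/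
/-!
Writing `r • F r = c + g r` with `g r → 0`, the integral splits as
`∫₀¹ r^{s-1} F = c / (s-1) + ∫₀¹ r^{s-2} g`. The weight `(s-1) r^{s-2}` has total mass one on
`(0,1]` and its mass on `[δ,1]` is at most `(s-1)/δ`, so `(s-1) ∫₀¹ r^{s-2} g` is eventually
as small as `g` is near `0`.
-/

open Filter MeasureTheory Set Topology

lemma integrableOn_rpow_Ioc_zero_one {t : ℝ} (ht : -1 < t) :
    IntegrableOn (fun r : ℝ => r ^ t) (Ioc 0 1) :=
  (intervalIntegrable_iff_integrableOn_Ioc_of_le zero_le_one).mp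
    (intervalIntegral.intervalIntegrable_rpow' ht)

lemma setIntegral_rpow_Ioc_zero_one {t : ℝ} (ht : -1 < t) :
    ∫ r in Ioc (0 : ℝ) 1, r ^ t = 1 / (t + 1) := by
  rw [← intervalIntegral.integral_of_le zero_le_one, integral_rpow (Or.inl ht),
    Real.one_rpow, Real.zero_rpow (by linarith), sub_zero]

section

variable {E : Type*} [NormedAddCommGroup E] [NormedSpace ℝ E]

lemma sub_one_smul_setIntegral_rpow_smul [CompleteSpace E] {F : ℝ → E} (c : E) {s : ℝ}
    (hs : 1 < s) (hF : IntegrableOn (fun r : ℝ => r ^ (s - 1) • F r) (Ioc 0 1)) :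
    (s - 1) • ∫ r in Ioc (0 : ℝ) 1, r ^ (s - 1) • F r
      = c + (s - 1) • ∫ r in Ioc (0 : ℝ) 1, r ^ (s - 2) • (r • F r - c) := by
  have hc : IntegrableOn (fun r : ℝ => r ^ (s - 2) • c) (Ioc 0 1) :=
    (integrableOn_rpow_Ioc_zero_one (by linarith)).smul_const c
  have hpt : ∀ r ∈ Ioc (0 : ℝ) 1,
      r ^ (s - 2) • (r • F r - c) = r ^ (s - 1) • F r - r ^ (s - 2) • c := by
    intro r hr
    rw [smul_sub, smul_smul, ← Real.rpow_add_one hr.1.ne', show s - 2 + 1 = s - 1 by ring]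
  rw [setIntegral_congr_fun measurableSet_Ioc hpt, integral_sub hF hc, integral_smul_const,
    setIntegral_rpow_Ioc_zero_one (by linarith), show s - 2 + 1 = s - 1 by ring,
    smul_sub, smul_smul, mul_one_div_cancel (by linarith), one_smul, add_sub_cancel]

lemma norm_rpow_smul_le_of_le {g : ℝ → E} {ε δ M s r : ℝ} (hε : 0 ≤ ε) (hδ : 0 < δ)
    (hM : 0 ≤ M) (hsmall : ∀ r ∈ Ioo 0 δ, ‖g r‖ ≤ ε) (hbig : ∀ r ∈ Icc δ 1, ‖g r‖ ≤ M)
    (hs : 1 ≤ s) (hr : r ∈ Ioc 0 1) :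
    ‖r ^ (s - 2) • g r‖ ≤ ε * r ^ (s - 2) + M / δ := by
  have hpow : 0 ≤ r ^ (s - 2) := Real.rpow_nonneg hr.1.le _
  rw [norm_smul, Real.norm_of_nonneg hpow]
  rcases lt_or_ge r δ with hrδ | hδr
  · have hgr : ‖g r‖ ≤ ε := hsmall r ⟨hr.1, hrδ⟩
    have hMδ : 0 ≤ M / δ := by positivity
    linarith [mul_le_mul_of_nonneg_left hgr hpow]
  · have hpow_le : r ^ (s - 2) ≤ δ⁻¹ :=
      calc r ^ (s - 2) ≤ r ^ (-1 : ℝ) :=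
            Real.rpow_le_rpow_of_exponent_ge hr.1 hr.2 (by linarith)
        _ = r⁻¹ := Real.rpow_neg_one r
        _ ≤ δ⁻¹ := inv_anti₀ hδ hδr
    calc r ^ (s - 2) * ‖g r‖ ≤ δ⁻¹ * M :=
          mul_le_mul hpow_le (hbig r ⟨hδr, hr.2⟩) (norm_nonneg _) (by positivity)
      _ ≤ ε * r ^ (s - 2) + M / δ := by rw [inv_mul_eq_div]; linarith [mul_nonneg hε hpow]

lemma tendsto_sub_one_smul_setIntegral_rpow_smul {g : ℝ → E}
    (hg : Tendsto g (𝓝[>] 0) (𝓝 0)) (hbdd : ∀ δ > 0, ∃ M, ∀ r ∈ Icc δ 1, ‖g r‖ ≤ M) :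
    Tendsto (fun s : ℝ => (s - 1) • ∫ r in Ioc (0 : ℝ) 1, r ^ (s - 2) • g r)
      (𝓝[>] 1) (𝓝 0) := by
  rw [NormedAddGroup.tendsto_nhds_zero]
  intro ε hε
  obtain ⟨δ, hδ, hsmall⟩ := mem_nhdsGT_iff_exists_Ioo_subset.mp
    (hg (Metric.closedBall_mem_nhds 0 (half_pos hε)))
  obtain ⟨M, hM⟩ := hbdd δ hδ
  have hbound : Tendsto (fun s : ℝ => ε / 2 + (s - 1) * (max M 0 / δ)) (𝓝[>] 1) (𝓝 (ε / 2)) :=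
    tendsto_nhdsWithin_of_tendsto_nhds <|
      (by fun_prop : Continuous fun s : ℝ => ε / 2 + (s - 1) * (max M 0 / δ)).tendsto' 1 _
        (by simp)
  filter_upwards [hbound.eventually (gt_mem_nhds (half_lt_self hε)), self_mem_nhdsWithin]
    with s hsε (hs : 1 < s)
  calc ‖(s - 1) • ∫ r in Ioc (0 : ℝ) 1, r ^ (s - 2) • g r‖
      = (s - 1) * ‖∫ r in Ioc (0 : ℝ) 1, r ^ (s - 2) • g r‖ := by
        rw [norm_smul, Real.norm_of_nonneg (by linarith)]
    _ ≤ (s - 1) * ∫ r in Ioc (0 : ℝ) 1, (ε / 2 * r ^ (s - 2) + max M 0 / δ) := by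
        gcongr
        refine norm_integral_le_of_norm_le
          (((integrableOn_rpow_Ioc_zero_one (by linarith)).const_mul _).add
            (integrableOn_const (by simp))) ?_
        filter_upwards [ae_restrict_mem measurableSet_Ioc] with r hr
        exact norm_rpow_smul_le_of_le (half_pos hε).le hδ (le_max_right M 0)
          (fun r hr => mem_closedBall_zero_iff.mp (hsmall hr))
          (fun r hr => (hM r hr).trans (le_max_left M 0)) hs.le hr
    _ = ε / 2 + (s - 1) * (max M 0 / δ) := by
        rw [integral_add ((integrableOn_rpow_Ioc_zero_one (by linarith)).const_mul _)
            (integrableOn_const (by simp)), integral_const_mul,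
          setIntegral_rpow_Ioc_zero_one (by linarith), setIntegral_const,
          Real.volume_real_Ioc_of_le zero_le_one, sub_zero, one_smul,
          show s - 2 + 1 = s - 1 by ring]
        field_simp [(sub_pos.mpr hs).ne']
    _ < ε := hsε

end

theorem stmt_16_general (F : ℝ → ℂ) (c : ℂ)
    (hbdd : ∀ ε : ℝ, 0 < ε → ∃ C : ℝ, ∀ r ∈ Set.Icc ε 1, ‖F r‖ ≤ C)
    (hint : ∀ s : ℝ, 1 < s →
      IntegrableOn (fun r : ℝ => (r ^ (s - 1) : ℝ) • F r) (Set.Ioc 0 1))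
    (hlim : Tendsto (fun r : ℝ => r • F r) (nhdsWithin 0 (Set.Ioi 0)) (nhds c)) :
    Tendsto (fun s : ℝ => ((s : ℂ) - 1) * (s : ℂ) *
        ∫ r in Set.Ioc (0:ℝ) 1, (r ^ (s - 1) : ℝ) • F r)
      (nhdsWithin 1 (Set.Ioi 1)) (nhds c) := by
  have hg : Tendsto (fun r : ℝ => r • F r - c) (𝓝[>] 0) (𝓝 0) := by
    simpa using hlim.sub_const c
  have hgbdd : ∀ δ > 0, ∃ M, ∀ r ∈ Icc δ 1, ‖r • F r - c‖ ≤ M := by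
    intro δ hδ
    obtain ⟨C, hC⟩ := hbdd δ hδ
    refine ⟨C + ‖c‖, fun r hr => (norm_sub_le _ _).trans ?_⟩
    have hr0 : 0 ≤ r := hδ.le.trans hr.1
    rw [norm_smul, Real.norm_of_nonneg hr0]
    nlinarith [hC r hr, norm_nonneg (F r), hr.2]
  have hs : Tendsto (fun s : ℝ => (s : ℂ)) (𝓝[>] 1) (𝓝 1) :=
    (Complex.continuous_ofReal.tendsto' 1 1 Complex.ofReal_one).mono_left nhdsWithin_le_nhds
  have hlimit := hs.mul ((tendsto_sub_one_smul_setIntegral_rpow_smul hg hgbdd).const_add c)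
  rw [add_zero, one_mul] at hlimit
  refine hlimit.congr' (eventually_nhdsWithin_of_forall fun s (hs1 : 1 < s) => ?_)
  rw [← sub_one_smul_setIntegral_rpow_smul c hs1 (hint s hs1), Complex.real_smul]
  push_cast
  ring

/-- Abelian limit lemma: let `F : (0,1] → ℂ` be measurable, bounded on compact subsets of
`(0,1]`, integrable against `r^{s-1}` on `(0,1]` for each `s > 1`, and satisfy `r · F r → c`
as `r → 0⁺`.  Then `(s-1) · s · ∫₀¹ r^{s-1} F r dr → c` as `s ↓ 1`. -/
theorem stmt_16 (F : ℝ → ℂ) (c : ℂ)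
    (hmeas : Measurable F)
    (hbdd : ∀ ε : ℝ, 0 < ε → ∃ C : ℝ, ∀ r ∈ Set.Icc ε 1, ‖F r‖ ≤ C)
    (hint : ∀ s : ℝ, 1 < s →
      IntegrableOn (fun r : ℝ => (r ^ (s - 1) : ℝ) • F r) (Set.Ioc 0 1))
    (hlim : Tendsto (fun r : ℝ => r • F r) (nhdsWithin 0 (Set.Ioi 0)) (nhds c)) :
    Tendsto (fun s : ℝ => ((s : ℂ) - 1) * (s : ℂ) *
        ∫ r in Set.Ioc (0:ℝ) 1, (r ^ (s - 1) : ℝ) • F r)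
      (nhdsWithin 1 (Set.Ioi 1)) (nhds c) :=
  stmt_16_general F c hbdd hint hlim
end

section
/- Property (D) implies square-summable normalized boundary volumes: let V ∈ C²(ℝ_{≥0}) be positive and increasing with V'(r)/V(r) ∈ L²([1,∞)) and V''(r)/V'(r) → 0 as r → ∞, and V' > 0. Then for every h > 0 the sequence k ↦ sup_{s∈[0,h]} V'(k+1+s) / V(k+1) is in ℓ²(ℕ). -/
/-!
Once `|V''/V'| ≤ 1`, Grönwall's inequality gives `V'(y) ≤ e^{y-x} V'(x)` for `x ≤ y`, so for
`t ∈ (k, k+1]` the supremum of `V'` over `[k+1, k+1+h]` is at most `e^{h+1} V'(t)`, while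
`V(t) ≤ V(k+1)` by monotonicity. Hence the `k`-th term is at most `e^{2(h+1)} (V'/V)²(t)` for
every such `t`, i.e. at most `e^{2(h+1)} ∫_k^{k+1} (V'/V)²`, and these integrals are summable.
-/

open Filter MeasureTheory Set Real

theorem norm_le_norm_mul_exp_of_norm_deriv_le {E : Type*} [NormedAddCommGroup E] [NormedSpace ℝ E]
    {f f' : ℝ → E} {K a b : ℝ} (hab : a ≤ b) (hf : ∀ x ∈ Icc a b, HasDerivAt f (f' x) x)
    (bound : ∀ x ∈ Icc a b, ‖f' x‖ ≤ K * ‖f x‖) :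
    ‖f b‖ ≤ ‖f a‖ * exp (K * (b - a)) := by
  rw [← gronwallBound_ε0]
  refine norm_le_gronwallBound_of_norm_deriv_right_le
    (fun x hx => (hf x hx).continuousAt.continuousWithinAt)
    (fun x hx => (hf x (Ico_subset_Icc_self hx)).hasDerivWithinAt) le_rfl
    (fun x hx => by simpa using bound x (Ico_subset_Icc_self hx)) b ⟨hab, le_rfl⟩

theorem eventually_le_mul_exp_of_tendsto_deriv_div {f f' : ℝ → ℝ} {ε : ℝ}
    (hf : ∀ᶠ x in atTop, HasDerivAt f (f' x) x) (hpos : ∀ᶠ x in atTop, 0 < f x)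
    (hlim : Tendsto (fun x => f' x / f x) atTop (nhds 0)) (hε : 0 < ε) :
    ∀ᶠ R in atTop, ∀ x, R ≤ x → ∀ y, x ≤ y → f y ≤ f x * exp (ε * (y - x)) := by
  obtain ⟨R, hR⟩ := eventually_atTop.1 <|
    hf.and (hpos.and (hlim.eventually (Metric.closedBall_mem_nhds 0 hε)))
  refine eventually_atTop.2 ⟨R, fun R' hR' x hx y hxy => ?_⟩
  have hfx : ∀ z, x ≤ z → HasDerivAt f (f' z) z ∧ 0 < f z ∧ ‖f' z‖ ≤ ε * ‖f z‖ := by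
    intro z hz
    obtain ⟨hd, hp, hb⟩ := hR z (by linarith)
    rw [dist_zero_right, norm_div, div_le_iff₀ (norm_pos_iff.2 hp.ne')] at hb
    exact ⟨hd, hp, hb⟩
  have key := norm_le_norm_mul_exp_of_norm_deriv_le hxy (fun z hz => (hfx z hz.1).1)
    (fun z hz => (hfx z hz.1).2.2)
  rwa [Real.norm_of_nonneg (hfx y hxy).2.1.le, Real.norm_of_nonneg (hfx x le_rfl).2.1.le] at key

theorem summable_of_le_of_integrableOn_Ioi {g : ℝ → ℝ} {u : ℕ → ℝ} {a : ℝ}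
    (hg : IntegrableOn g (Ioi a)) (hu0 : ∀ k, 0 ≤ u k)
    (hu : ∀ k : ℕ, ∀ t ∈ Ioc (a + k) (a + k + 1), u k ≤ g t) : Summable u := by
  have hdisj : Pairwise (Function.onFun Disjoint fun k : ℕ => Ioc (a + k) (a + k + 1)) :=
    fun i j hij => by
      simpa using pairwise_disjoint_Ioc_add_intCast a (Nat.cast_injective.ne hij : (i : ℤ) ≠ j)
  have hsub : (⋃ k : ℕ, Ioc (a + k) (a + k + 1)) ⊆ Ioi a :=
    iUnion_subset fun k t ht => by simp only [mem_Ioi]; linarith [ht.1, k.cast_nonneg (α := ℝ)]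
  refine Summable.of_nonneg_of_le hu0 (fun k => ?_)
    (hasSum_integral_iUnion (fun _ => measurableSet_Ioc) hdisj (hg.mono_set hsub)).summable
  simpa using setIntegral_ge_of_const_le_real measurableSet_Ioc (by simp) (hu k)
    (hg.mono_set ((subset_iUnion (fun k : ℕ => Ioc (a + k) (a + k + 1)) k).trans hsub))

theorem iSup_Icc_le_mul_exp {f : ℝ → ℝ} {R t a h : ℝ}
    (hf : ∀ x, R ≤ x → ∀ y, x ≤ y → f y ≤ f x * exp (y - x))
    (hRt : R ≤ t) (hta : t ≤ a) (hft : 0 ≤ f t) :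
    ⨆ s ∈ Icc 0 h, f (a + s) ≤ f t * exp (a + h - t) := by
  have hbound : 0 ≤ f t * exp (a + h - t) := by positivity
  refine Real.iSup_le (fun s => Real.iSup_le (fun hs => ?_) hbound) hbound
  calc f (a + s) ≤ f t * exp (a + s - t) := hf t hRt _ (by linarith [hs.1])
    _ ≤ f t * exp (a + h - t) := by gcongr; exact hs.2

theorem sq_iSup_div_le_of_le_mul_exp {V V' : ℝ → ℝ} {R x t h : ℝ}
    (hgrowth : ∀ x, R ≤ x → ∀ y, x ≤ y → V' y ≤ V' x * exp (y - x))
    (hV'pos : ∀ y, R ≤ y → 0 < V' y) (hVt : 0 < V t) (hV : V t ≤ V (x + 1))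
    (hRx : R ≤ x) (ht : t ∈ Ioc x (x + 1)) :
    ((⨆ s ∈ Icc 0 h, V' (x + 1 + s)) / V (x + 1)) ^ 2 ≤ exp (h + 1) ^ 2 * (V' t / V t) ^ 2 := by
  have hV't := hV'pos t (hRx.trans ht.1.le)
  have hsup := iSup_Icc_le_mul_exp (h := h) hgrowth (hRx.trans ht.1.le) ht.2 hV't.le
  have hsup_nonneg : 0 ≤ ⨆ s ∈ Icc 0 h, V' (x + 1 + s) :=
    Real.iSup_nonneg fun s => Real.iSup_nonneg fun hs => (hV'pos _ (by linarith [hs.1])).le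
  have hexp : exp (x + 1 + h - t) ≤ exp (h + 1) := exp_le_exp.2 (by linarith [ht.1])
  have hratio : (⨆ s ∈ Icc 0 h, V' (x + 1 + s)) / V (x + 1) ≤ V' t * exp (h + 1) / V t :=
    div_le_div₀ (by positivity) (hsup.trans (by gcongr)) hVt hV
  calc ((⨆ s ∈ Icc 0 h, V' (x + 1 + s)) / V (x + 1)) ^ 2
      ≤ (V' t * exp (h + 1) / V t) ^ 2 :=
        pow_le_pow_left₀ (div_nonneg hsup_nonneg (hVt.trans_le hV).le) hratio 2
    _ = exp (h + 1) ^ 2 * (V' t / V t) ^ 2 := by ring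

theorem stmt_18_general (V V' V'' : ℝ → ℝ)
    (hD1 : ∀ x : ℝ, 0 < x → HasDerivAt V (V' x) x)
    (hD2 : ∀ x : ℝ, 0 < x → HasDerivAt V' (V'' x) x)
    (hVpos : ∀ x : ℝ, 0 ≤ x → 0 < V x)
    (hV'pos : ∀ x : ℝ, 0 < x → 0 < V' x)
    (hL2 : MeasureTheory.IntegrableOn (fun r => (V' r / V r) ^ 2) (Set.Ici 1))
    (hlim : Tendsto (fun r => V'' r / V' r) atTop (nhds 0)) :
    ∀ h : ℝ, 0 < h →
      Summable (fun k : ℕ =>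
        ((⨆ s ∈ Set.Icc (0:ℝ) h, V' ((k : ℝ) + 1 + s)) / V ((k : ℝ) + 1)) ^ 2) := by
  intro h _
  have hVmono : MonotoneOn V (Ioi 0) :=
    monotoneOn_of_hasDerivWithinAt_nonneg (f' := V') (convex_Ioi 0)
      (fun x hx => (hD1 x hx).continuousAt.continuousWithinAt)
      (fun x hx => (hD1 x (by simpa using hx)).hasDerivWithinAt)
      (fun x hx => (hV'pos x (by simpa using hx)).le)
  have hgrowth := eventually_le_mul_exp_of_tendsto_deriv_div
    ((eventually_gt_atTop 0).mono hD2) ((eventually_gt_atTop 0).mono hV'pos) hlim one_pos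
  obtain ⟨K, hgrowthK, hK⟩ :=
    (tendsto_natCast_atTop_atTop.eventually (hgrowth.and (eventually_ge_atTop 1))).exists
  simp only [one_mul] at hgrowthK
  refine (summable_nat_add_iff K).mp <| summable_of_le_of_integrableOn_Ioi
    (IntegrableOn.mono_set (hL2.const_mul (exp (h + 1) ^ 2)) (Ioi_subset_Ici hK))
    (fun k => sq_nonneg _) fun k t ht => ?_
  rw [add_comm (K : ℝ)] at ht
  have ht0 : 0 < t := by linarith [ht.1, k.cast_nonneg (α := ℝ)]
  push_cast
  exact sq_iSup_div_le_of_le_mul_exp hgrowthK (fun y hy => hV'pos y (by linarith))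
    (hVpos t ht0.le) (hVmono ht0 (by simp only [mem_Ioi]; linarith [ht.2]) ht.2)
    (le_add_of_nonneg_left k.cast_nonneg) ht

/-- Property (D) implies square-summable normalized boundary volumes: let `V` be positive on
`[0, ∞)` and twice differentiable on `(0, ∞)` with derivative `V'` and second derivative
`V''`, with `V' > 0`, `V'/V ∈ L²([1, ∞))` and `V''(r)/V'(r) → 0` as `r → ∞`.  Then for every
`h > 0` the sequence `k ↦ (sup_{s ∈ [0,h]} V'(k+1+s)) / V(k+1)` is square-summable. -/
theorem stmt_18 (V V' V'' : ℝ → ℝ)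
    (hD1 : ∀ x : ℝ, 0 < x → HasDerivAt V (V' x) x)
    (hD2 : ∀ x : ℝ, 0 < x → HasDerivAt V' (V'' x) x)
    (hcont : ContinuousOn V'' (Set.Ioi 0))
    (hVpos : ∀ x : ℝ, 0 ≤ x → 0 < V x)
    (hV'pos : ∀ x : ℝ, 0 < x → 0 < V' x)
    (hL2 : MeasureTheory.IntegrableOn (fun r => (V' r / V r) ^ 2) (Set.Ici 1))
    (hlim : Tendsto (fun r => V'' r / V' r) atTop (nhds 0)) :
    ∀ h : ℝ, 0 < h →
      Summable (fun k : ℕ =>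
        ((⨆ s ∈ Set.Icc (0:ℝ) h, V' ((k : ℝ) + 1 + s)) / V ((k : ℝ) + 1)) ^ 2) :=
  stmt_18_general V V' V'' hD1 hD2 hVpos hV'pos hL2 hlim
end
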